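/- The Hochschild–Kostant–Rosenberg map φ_HKR(ξ₁∧...∧ξ_k)(f₁⊗...⊗f_k) = (1/k!)·Alt_{ξ₁,...,ξ_k} ξ₁(f₁)···ξ_k(f_k) is a morphism of complexes from polyvector fields (with zero differential) to the Hochschild complex of polydifferential operators: for every polyvector field γ, d_Hoch(φ_HKR(γ)) = 0, i.e. φ_HKR(γ) is a Hochschild cocycle. -/

import Mathlib

/- STATEMENT 13: the Hochschild–Kostant–Rosenberg map
φ_HKR(ξ₁∧...∧ξ_k)(f₁⊗...⊗f_k) = (1/k!)·Alt_{ξ₁,...,ξ_k} ξ₁(f₁)···ξ_k(f_k)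
takes polyvector fields to Hochschild cocycles: d_Hoch(φ_HKR(γ)) = 0.
Here A = ℂ[x₁,...,x_d]; a vector field ξ is a d-tuple of polynomials acting by
ξ(f) = Σ_j ξ_j ∂f/∂x_j, and polyvector fields are spanned by decomposables
ξ₁∧...∧ξ_k, on which φ_HKR is defined. -/

open MvPolynomial

def dHoch {A : Type*} [Ring A] (k : ℕ) (φ : (Fin k → A) → A) :
    (Fin (k + 1) → A) → A := fun a =>
  a 0 * φ (fun i => a i.succ)
    + ∑ i : Fin k, (-1 : A) ^ (i.1 + 1) *
        φ (fun j => if j.1 < i.1 then a ⟨j.1, by have := j.2; omega⟩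
            else if j.1 = i.1 then a ⟨i.1, by have := i.2; omega⟩ * a ⟨i.1 + 1, by have := i.2; omega⟩
            else a ⟨j.1 + 1, by have := j.2; omega⟩)
    + (-1 : A) ^ (k + 1) * (φ (fun i => a i.castSucc) * a (Fin.last k))

/-- The action of the vector field `ξ = Σ ξ_j ∂/∂x_j` on a polynomial. -/
noncomputable def act {d : ℕ} (ξ : Fin d → MvPolynomial (Fin d) ℂ)
    (f : MvPolynomial (Fin d) ℂ) : MvPolynomial (Fin d) ℂ :=
  ∑ j : Fin d, ξ j * MvPolynomial.pderiv j f

/-- The Hochschild–Kostant–Rosenberg map on the decomposable polyvector field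
`ξ₁ ∧ ... ∧ ξ_k`. -/
noncomputable def hkr {d k : ℕ} (ξ : Fin k → (Fin d → MvPolynomial (Fin d) ℂ)) :
    (Fin k → MvPolynomial (Fin d) ℂ) → MvPolynomial (Fin d) ℂ := fun f =>
  ((k.factorial : ℂ))⁻¹ •
    ∑ σ : Equiv.Perm (Fin k), (Equiv.Perm.sign σ : ℤ) • ∏ i : Fin k, act (ξ (σ i)) (f i)

/-! Each summand of `φ_HKR(ξ)` is a cochain `f ↦ ∏ᵢ Dᵢ(fᵢ)` with derivations `Dᵢ = ξ_{σ i}`.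
For it, put `r_m = a_m · ∏_j D_j(b_j)`, where `b_j = a_j` for `j < m` and `b_j = a_{j+1}`
otherwise. The two outer faces of `d_Hoch` are `r_0` and `r_k`, and by the Leibniz rule the
`i`-th inner face is `r_i + r_{i+1}`, so the alternating sum telescopes to zero. -/

def hochFace {A : Type*} [Mul A] {k : ℕ} (a : Fin (k + 1) → A) (i : Fin k) : Fin k → A :=
  fun j => if j < i then a j.castSucc else if j = i then a i.castSucc * a i.succ else a j.succ

lemma dHoch_eq_sum_faces {A : Type*} [Ring A] (k : ℕ) (φ : (Fin k → A) → A)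
    (a : Fin (k + 1) → A) :
    dHoch k φ a = a 0 * φ (fun i => a i.succ)
      + ∑ i : Fin k, (-1 : A) ^ (i.1 + 1) * φ (hochFace a i)
      + (-1 : A) ^ (k + 1) * (φ (fun i => a i.castSucc) * a (Fin.last k)) := by
  unfold dHoch
  congr 3 with i
  congr 2 with j
  simp only [hochFace, Fin.lt_def, Fin.ext_iff]
  rfl

lemma dHoch_eq_zero_of_telescoping {A : Type*} [Ring A] {k : ℕ} (φ : (Fin k → A) → A)
    (a : Fin (k + 1) → A) (r : Fin (k + 1) → A)
    (h_first : a 0 * φ (fun i => a i.succ) = r 0)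
    (h_mid : ∀ i : Fin k, φ (hochFace a i) = r i.castSucc + r i.succ)
    (h_last : φ (fun i => a i.castSucc) * a (Fin.last k) = r (Fin.last k)) :
    dHoch k φ a = 0 := by
  have h := Fin.sum_neg_one_pow_eq_zero
    (Fin.cons (a 0 * φ (fun i => a i.succ))
      (Fin.snoc (fun i => φ (hochFace a i)) (φ (fun i => a i.castSucc) * a (Fin.last k))))
    r h_first (fun i => by simpa [← Fin.succ_castSucc] using h_mid i) (by simpa using h_last)
  rw [Fin.sum_univ_succ, Fin.sum_univ_castSucc] at h
  simpa [dHoch_eq_sum_faces, zsmul_eq_mul, pow_succ, add_assoc] using h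

lemma dHoch_prod_of_leibniz {A : Type*} [CommRing A] {k : ℕ} (D : Fin k → A → A)
    (hD : ∀ j x y, D j (x * y) = D j x * y + x * D j y) (a : Fin (k + 1) → A) :
    dHoch k (fun f => ∏ i, D i (f i)) a = 0 := by
  let r : Fin (k + 1) → A := fun m =>
    a m * ∏ j, D j (if j.castSucc < m then a j.castSucc else a j.succ)
  refine dHoch_eq_zero_of_telescoping _ a r (by simp [r]) (fun i => ?_) ?_
  · have h_rest (m : Fin (k + 1)) (hm : m = i.castSucc ∨ m = i.succ) :
        ∏ j ∈ Finset.univ.erase i, D j (hochFace a i j)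
          = ∏ j ∈ Finset.univ.erase i, D j (if j.castSucc < m then a j.castSucc else a j.succ) := by
      refine Finset.prod_congr rfl fun j hj => ?_
      have hji := Finset.ne_of_mem_erase hj
      rcases hm with rfl | rfl <;> rcases lt_or_gt_of_ne hji with h | h <;>
        simp [hochFace, h, h.le, h.not_gt, h.not_ge, hji]
    simp only [r, ← Finset.mul_prod_erase Finset.univ _ (Finset.mem_univ i),
      ← h_rest _ (.inl rfl), ← h_rest _ (.inr rfl)]
    simp only [hochFace, lt_self_iff_false, ↓reduceIte, hD, Fin.castSucc_lt_succ_iff,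
      le_refl]
    ring
  · simp [r, mul_comm]

lemma dHoch_smul {A R : Type*} [Ring A] [Monoid R] [DistribMulAction R A]
    [SMulCommClass R A A] [IsScalarTower R A A] (k : ℕ) (c : R)
    (φ : (Fin k → A) → A) (a : Fin (k + 1) → A) :
    dHoch k (fun f => c • φ f) a = c • dHoch k φ a := by
  simp only [dHoch, mul_smul_comm, smul_mul_assoc, ← Finset.smul_sum, smul_add]

lemma dHoch_sum {A ι : Type*} [Ring A] (s : Finset ι) (k : ℕ)
    (φ : ι → (Fin k → A) → A) (a : Fin (k + 1) → A) :
    dHoch k (fun f => ∑ σ ∈ s, φ σ f) a = ∑ σ ∈ s, dHoch k (φ σ) a := by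
  simp only [dHoch, Finset.mul_sum, Finset.sum_mul, Finset.sum_add_distrib]
  rw [Finset.sum_comm]

lemma act_mul {d : ℕ} (ξ : Fin d → MvPolynomial (Fin d) ℂ) (f g : MvPolynomial (Fin d) ℂ) :
    act ξ (f * g) = act ξ f * g + f * act ξ g := by
  simp only [act, pderiv_mul, mul_add, Finset.sum_add_distrib, Finset.sum_mul, Finset.mul_sum]
  congr 1 <;> exact Finset.sum_congr rfl fun j _ => by ring

/-- `φ_HKR(γ)` is a Hochschild cocycle. -/
theorem hkr_is_cocycle (d k : ℕ) (ξ : Fin k → (Fin d → MvPolynomial (Fin d) ℂ)) :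
    ∀ a : Fin (k + 1) → MvPolynomial (Fin d) ℂ, dHoch k (hkr ξ) a = 0 := by
  intro a
  have h_summand (σ : Equiv.Perm (Fin k)) :
      dHoch k (fun f => (Equiv.Perm.sign σ : ℤ) • ∏ i, act (ξ (σ i)) (f i)) a = 0 := by
    rw [dHoch_smul, dHoch_prod_of_leibniz _ (fun i => act_mul (ξ (σ i))), smul_zero]
  unfold hkr
  rw [dHoch_smul, dHoch_sum, Finset.sum_eq_zero fun σ _ => h_summand σ, smul_zero]
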